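/- arXiv:1207.3703 — 2 statements merged into one kernel-verified Lean document; each statement's English description precedes it below -/
import Mathlib

section
/- Let N ≥ 1, Ω ⊂ ℝ^N a smoothly bounded domain, and f, g nondecreasing C¹ functions. Let (u, v) ∈ C²(Ω̄)² be a stable solution of the system −Δu = g(v), −Δv = f(u) in Ω with u = v = 0 on ∂Ω. Then for every φ ∈ C¹_c(Ω): ∫_Ω √(f′(u) g′(v)) φ² dx ≤ ∫_Ω |∇φ|² dx. -/
open MeasureTheory Real
open scoped RealInnerProductSpace

/-- The Laplacian of `u : ℝ^N → ℝ`, computed as the sum of second derivatives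
along the standard basis directions. -/
noncomputable def lap {N : ℕ} (u : EuclideanSpace ℝ (Fin N) → ℝ)
    (x : EuclideanSpace ℝ (Fin N)) : ℝ :=
  ∑ i : Fin N,
    fderiv ℝ (fun y => fderiv ℝ u y (EuclideanSpace.single i 1)) x (EuclideanSpace.single i 1)

/-- A (smoothly bounded) domain: a nonempty bounded open connected subset of `ℝ^N`. -/
def IsBoundedDomain {N : ℕ} (Ω : Set (EuclideanSpace ℝ (Fin N))) : Prop :=
  IsOpen Ω ∧ IsConnected Ω ∧ Bornology.IsBounded Ω

/-- `(u, v)` is a classical solution of the Gelfand system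
`-Δu = μ e^v`, `-Δv = λ e^u` in `Ω`, `u = v = 0` on `∂Ω`. -/
def IsGelfandSolution {N : ℕ} (Ω : Set (EuclideanSpace ℝ (Fin N))) (lam mu : ℝ)
    (u v : EuclideanSpace ℝ (Fin N) → ℝ) : Prop :=
  ContDiffOn ℝ 2 u (closure Ω) ∧ ContDiffOn ℝ 2 v (closure Ω) ∧
  (∀ x ∈ Ω, -lap u x = mu * exp (v x)) ∧
  (∀ x ∈ Ω, -lap v x = lam * exp (u x)) ∧
  (∀ x ∈ frontier Ω, u x = 0) ∧ (∀ x ∈ frontier Ω, v x = 0)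

/-- `(u, v)` is a stable classical solution of the Gelfand system: there exist `λ₁ ≥ 0` and
positive eigenfunctions `φ₁, ψ₁ ∈ C²(Ω̄)` of the linearized system, vanishing on `∂Ω`. -/
def IsStableGelfandSolution {N : ℕ} (Ω : Set (EuclideanSpace ℝ (Fin N))) (lam mu : ℝ)
    (u v : EuclideanSpace ℝ (Fin N) → ℝ) : Prop :=
  IsGelfandSolution Ω lam mu u v ∧
  ∃ (lam1 : ℝ) (φ₁ ψ₁ : EuclideanSpace ℝ (Fin N) → ℝ),
    0 ≤ lam1 ∧
    ContDiffOn ℝ 2 φ₁ (closure Ω) ∧ ContDiffOn ℝ 2 ψ₁ (closure Ω) ∧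
    (∀ x ∈ Ω, 0 < φ₁ x) ∧ (∀ x ∈ Ω, 0 < ψ₁ x) ∧
    (∀ x ∈ Ω, -lap φ₁ x - mu * exp (v x) * ψ₁ x = lam1 * φ₁ x) ∧
    (∀ x ∈ Ω, -lap ψ₁ x - lam * exp (u x) * φ₁ x = lam1 * ψ₁ x) ∧
    (∀ x ∈ frontier Ω, φ₁ x = 0) ∧ (∀ x ∈ frontier Ω, ψ₁ x = 0)

/-- `(u, v)` is a classical solution of the system
`-Δu = g(v)`, `-Δv = f(u)` in `Ω`, `u = v = 0` on `∂Ω`. -/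
def IsSystemSolution {N : ℕ} (Ω : Set (EuclideanSpace ℝ (Fin N))) (f g : ℝ → ℝ)
    (u v : EuclideanSpace ℝ (Fin N) → ℝ) : Prop :=
  ContDiffOn ℝ 2 u (closure Ω) ∧ ContDiffOn ℝ 2 v (closure Ω) ∧
  (∀ x ∈ Ω, -lap u x = g (v x)) ∧
  (∀ x ∈ Ω, -lap v x = f (u x)) ∧
  (∀ x ∈ frontier Ω, u x = 0) ∧ (∀ x ∈ frontier Ω, v x = 0)

/-- Stability of a classical solution of the system `-Δu = g(v)`, `-Δv = f(u)`:
there exist `λ₁ ≥ 0` and positive `φ₁, ψ₁ ∈ C²(Ω̄)` solving the linearized system. -/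
def IsStableSystemSolution {N : ℕ} (Ω : Set (EuclideanSpace ℝ (Fin N))) (f g : ℝ → ℝ)
    (u v : EuclideanSpace ℝ (Fin N) → ℝ) : Prop :=
  IsSystemSolution Ω f g u v ∧
  ∃ (lam1 : ℝ) (φ₁ ψ₁ : EuclideanSpace ℝ (Fin N) → ℝ),
    0 ≤ lam1 ∧
    ContDiffOn ℝ 2 φ₁ (closure Ω) ∧ ContDiffOn ℝ 2 ψ₁ (closure Ω) ∧
    (∀ x ∈ Ω, 0 < φ₁ x) ∧ (∀ x ∈ Ω, 0 < ψ₁ x) ∧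
    (∀ x ∈ Ω, -lap φ₁ x - deriv g (v x) * ψ₁ x = lam1 * φ₁ x) ∧
    (∀ x ∈ Ω, -lap ψ₁ x - deriv f (u x) * φ₁ x = lam1 * ψ₁ x) ∧
    (∀ x ∈ frontier Ω, φ₁ x = 0) ∧ (∀ x ∈ frontier Ω, ψ₁ x = 0)


/-!
Picone's identity `∂ᵥ(φ² / w) ∂ᵥw = (∂ᵥφ)² - (∂ᵥφ - φ ∂ᵥw / w)²` and an integration by parts
give `∫ (-Δw / w) φ² ≤ ∫ |∇φ|²` for every `w ∈ C²(Ω)` without zeros. Apply this to the positive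
eigenfunctions `φ₁`, `ψ₁` of the linearized system: `-Δφ₁ / φ₁ = g'(v) ψ₁ / φ₁ + λ₁` and
`-Δψ₁ / ψ₁ = f'(u) φ₁ / ψ₁ + λ₁`, and since `f', g', λ₁ ≥ 0` the average of these two weights
dominates `√(f'(u) g'(v))` by AM-GM.
-/

open Set Function

section Support

variable {X : Type*} [TopologicalSpace X] {U : Set X} {φ w F : X → ℝ}

theorem tsupport_sq_div_subset : tsupport (fun y => φ y ^ 2 / w y) ⊆ tsupport φ :=
  closure_minimal (support_subset_iff'.2 fun x hx => by
    simp [image_eq_zero_of_notMem_tsupport hx]) (isClosed_tsupport φ)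

variable [MeasurableSpace X] [OpensMeasurableSpace X] {μ : Measure X}
  [IsFiniteMeasureOnCompacts μ]

theorem ContinuousOn.integrable_of_support_subset_tsupport (hF : ContinuousOn F U)
    (hU : IsOpen U) (hφc : HasCompactSupport φ) (hφU : tsupport φ ⊆ U)
    (hFφ : support F ⊆ tsupport φ) : Integrable F μ := by
  have hFφ' : tsupport F ⊆ tsupport φ := closure_minimal hFφ (isClosed_tsupport φ)
  exact (hF.continuous_of_tsupport_subset hU (hFφ'.trans hφU)).integrable_of_hasCompactSupport
    (hφc.mono' hFφ)

theorem integrable_sq_div_mul {r : X → ℝ} (hU : IsOpen U) (hw : ContinuousOn w U)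
    (hw0 : ∀ x ∈ U, w x ≠ 0) (hφ : Continuous φ) (hφc : HasCompactSupport φ)
    (hφU : tsupport φ ⊆ U) (hr : ContinuousOn r U) :
    Integrable (fun x => φ x ^ 2 / w x * r x) μ :=
  ((((hφ.pow 2).continuousOn).div hw hw0).mul hr).integrable_of_support_subset_tsupport
    hU hφc hφU (support_subset_iff'.2 fun x hx => by simp [image_eq_zero_of_notMem_tsupport hx])

end Support

section Picone

variable {E : Type*} [NormedAddCommGroup E] [NormedSpace ℝ E] {U : Set E} {φ w : E → ℝ}

theorem fderiv_sq_div_apply {x : E} (hφ : DifferentiableAt ℝ φ x) (hw : DifferentiableAt ℝ w x)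
    (hwx : w x ≠ 0) (v : E) :
    fderiv ℝ (fun y => φ y ^ 2 / w y) x v
      = 2 * φ x * fderiv ℝ φ x v / w x - φ x ^ 2 * fderiv ℝ w x v / w x ^ 2 := by
  have hd := (hφ.hasFDerivAt.pow 2).mul ((hasDerivAt_inv hwx).comp_hasFDerivAt x hw.hasFDerivAt)
  have hfun : (fun y => φ y ^ 2 / w y) = (fun y => φ y ^ 2) * (fun t => t⁻¹) ∘ w := by
    ext y; simp [div_eq_mul_inv]
  rw [hfun, hd.fderiv]
  simp only [neg_smul, smul_neg, comp_apply, Nat.add_one_sub_one, pow_one, nsmul_eq_mul,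
    Nat.cast_ofNat, add_apply, neg_apply, smul_apply, smul_eq_mul]
  field_simp
  ring

theorem fderiv_sq_div_apply_mul_le {x : E} (hφ : DifferentiableAt ℝ φ x)
    (hw : DifferentiableAt ℝ w x) (hwx : w x ≠ 0) (v : E) :
    fderiv ℝ (fun y => φ y ^ 2 / w y) x v * fderiv ℝ w x v ≤ fderiv ℝ φ x v ^ 2 := by
  have hpicone : fderiv ℝ (fun y => φ y ^ 2 / w y) x v * fderiv ℝ w x v
      = fderiv ℝ φ x v ^ 2 - (fderiv ℝ φ x v - φ x * fderiv ℝ w x v / w x) ^ 2 := by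
    rw [fderiv_sq_div_apply hφ hw hwx]
    field_simp
    ring
  rw [hpicone]
  exact sub_le_self _ (sq_nonneg _)

theorem ContDiffOn.fderiv_apply_of_isOpen (hw : ContDiffOn ℝ 2 w U) (hU : IsOpen U) (v : E) :
    ContDiffOn ℝ 1 (fun y => fderiv ℝ w y v) U :=
  (hw.fderiv_of_isOpen hU (by norm_num)).clm_apply contDiffOn_const

theorem DifferentiableOn.differentiable_of_tsupport_subset {F : E → ℝ}
    (hF : DifferentiableOn ℝ F U) (hU : IsOpen U) (hFU : tsupport F ⊆ U) :
    Differentiable ℝ F := by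
  intro x
  by_cases hx : x ∈ U
  · exact hF.differentiableAt (hU.mem_nhds hx)
  · exact (HasFDerivAt.of_notMem_tsupport ℝ fun h => hx (hFU h)).differentiableAt

section Integrable

variable [MeasurableSpace E] [OpensMeasurableSpace E] {μ : Measure E}
  [IsFiniteMeasureOnCompacts μ]

theorem ContDiff.integrable_fderiv_apply_sq (hφ : ContDiff ℝ 1 φ) (hφc : HasCompactSupport φ)
    (v : E) : Integrable (fun x => fderiv ℝ φ x v ^ 2) μ :=
  (((hφ.continuous_fderiv one_ne_zero).clm_apply continuous_const).pow 2).continuousOn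
    |>.integrable_of_support_subset_tsupport isOpen_univ hφc (subset_univ _)
      (support_subset_iff'.2 fun x hx => by simp [fderiv_of_notMem_tsupport ℝ hx])

theorem integrable_fderiv_sq_div_apply_mul {r : E → ℝ} (hU : IsOpen U) (hw : ContDiffOn ℝ 1 w U)
    (hw0 : ∀ x ∈ U, w x ≠ 0) (hφ : ContDiff ℝ 1 φ) (hφc : HasCompactSupport φ)
    (hφU : tsupport φ ⊆ U) (hr : ContinuousOn r U) (v : E) :
    Integrable (fun x => fderiv ℝ (fun y => φ y ^ 2 / w y) x v * r x) μ := by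
  have hh : ContDiffOn ℝ 1 (fun y => φ y ^ 2 / w y) U := (hφ.contDiffOn.pow 2).div hw hw0
  refine (((hh.continuousOn_fderiv_of_isOpen hU le_rfl).clm_apply continuousOn_const).mul hr
    ).integrable_of_support_subset_tsupport hU hφc hφU (support_subset_iff'.2 fun x hx => ?_)
  simp [fderiv_of_notMem_tsupport ℝ fun hx' => hx (tsupport_sq_div_subset hx')]

end Integrable

variable [MeasurableSpace E] [BorelSpace E] [FiniteDimensional ℝ E] {μ : Measure E}
  [μ.IsAddHaarMeasure]

theorem integral_sq_div_mul_fderiv_fderiv_eq_neg (hU : IsOpen U) (hw : ContDiffOn ℝ 2 w U)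
    (hw0 : ∀ x ∈ U, w x ≠ 0) (hφ : ContDiff ℝ 1 φ) (hφc : HasCompactSupport φ)
    (hφU : tsupport φ ⊆ U) (v : E) :
    ∫ x, φ x ^ 2 / w x * fderiv ℝ (fun y => fderiv ℝ w y v) x v ∂μ
      = -∫ x, fderiv ℝ (fun y => φ y ^ 2 / w y) x v * fderiv ℝ w x v ∂μ := by
  have hw1 : ContDiffOn ℝ 1 w U := hw.of_le (by norm_num)
  have hDw := hw.fderiv_apply_of_isOpen hU v
  have hhU : tsupport (fun y => φ y ^ 2 / w y) ⊆ U := tsupport_sq_div_subset.trans hφU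
  refine integral_mul_fderiv_eq_neg_fderiv_mul_of_integrable
    (integrable_fderiv_sq_div_apply_mul hU hw1 hw0 hφ hφc hφU hDw.continuousOn v)
    (integrable_sq_div_mul hU hw1.continuousOn hw0 hφ.continuous hφc hφU
      ((hDw.continuousOn_fderiv_of_isOpen hU le_rfl).clm_apply continuousOn_const))
    (integrable_sq_div_mul hU hw1.continuousOn hw0 hφ.continuous hφc hφU hDw.continuousOn)
    (fun x _ => ?_) (fun x hx => ?_)
  · exact ((hφ.contDiffOn.pow 2).div hw1 hw0 |>.differentiableOn one_ne_zero
      ).differentiable_of_tsupport_subset hU hhU x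
  · exact (hDw.differentiableOn one_ne_zero).differentiableAt (hU.mem_nhds (hhU hx))

theorem neg_integral_sq_div_mul_fderiv_fderiv_le (hU : IsOpen U) (hw : ContDiffOn ℝ 2 w U)
    (hw0 : ∀ x ∈ U, w x ≠ 0) (hφ : ContDiff ℝ 1 φ) (hφc : HasCompactSupport φ)
    (hφU : tsupport φ ⊆ U) (v : E) :
    -∫ x, φ x ^ 2 / w x * fderiv ℝ (fun y => fderiv ℝ w y v) x v ∂μ
      ≤ ∫ x, fderiv ℝ φ x v ^ 2 ∂μ := by
  have hw1 : ContDiffOn ℝ 1 w U := hw.of_le (by norm_num)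
  rw [integral_sq_div_mul_fderiv_fderiv_eq_neg hU hw hw0 hφ hφc hφU, neg_neg]
  refine integral_mono (integrable_fderiv_sq_div_apply_mul hU hw1 hw0 hφ hφc hφU
      ((hw1.continuousOn_fderiv_of_isOpen hU le_rfl).clm_apply continuousOn_const) v)
    (hφ.integrable_fderiv_apply_sq hφc v) fun x => ?_
  by_cases hx : x ∈ U
  · exact fderiv_sq_div_apply_mul_le (hφ.differentiable one_ne_zero x)
      ((hw1.differentiableOn one_ne_zero).differentiableAt (hU.mem_nhds hx)) (hw0 x hx) v
  · have hDh : fderiv ℝ (fun y => φ y ^ 2 / w y) x = 0 :=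
      fderiv_of_notMem_tsupport ℝ fun h => hx (hφU (tsupport_sq_div_subset h))
    simp [hDh, sq_nonneg]

end Picone

section Euclidean

variable {N : ℕ} {U : Set (EuclideanSpace ℝ (Fin N))} {φ w : EuclideanSpace ℝ (Fin N) → ℝ}

theorem gradient_apply_eq_fderiv_single (x : EuclideanSpace ℝ (Fin N)) (i : Fin N) :
    gradient φ x i = fderiv ℝ φ x (EuclideanSpace.single i 1) := by
  have h : inner ℝ (gradient φ x) (EuclideanSpace.single i (1 : ℝ))
      = fderiv ℝ φ x (EuclideanSpace.single i 1) :=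
    InnerProductSpace.toDual_symm_apply
  rw [EuclideanSpace.inner_single_right] at h
  simpa using h

theorem sq_norm_gradient_eq_sum (x : EuclideanSpace ℝ (Fin N)) :
    ‖gradient φ x‖ ^ 2 = ∑ i, fderiv ℝ φ x (EuclideanSpace.single i 1) ^ 2 := by
  simp [EuclideanSpace.real_norm_sq_eq, gradient_apply_eq_fderiv_single]

theorem neg_lap_div_mul_sq_eq_sum (x : EuclideanSpace ℝ (Fin N)) :
    -lap w x / w x * φ x ^ 2 = ∑ i, -(φ x ^ 2 / w x *
      fderiv ℝ (fun y => fderiv ℝ w y (EuclideanSpace.single i 1)) x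
        (EuclideanSpace.single i 1)) := by
  rw [Finset.sum_neg_distrib, neg_div, neg_mul, lap, Finset.sum_div, Finset.sum_mul]
  congr 1
  exact Finset.sum_congr rfl fun i _ => by ring

theorem ContDiffOn.continuousOn_lap (hw : ContDiffOn ℝ 2 w U) (hU : IsOpen U) :
    ContinuousOn (lap w) U :=
  continuousOn_finsetSum _ fun _ _ =>
    ((hw.fderiv_apply_of_isOpen hU _).continuousOn_fderiv_of_isOpen hU le_rfl).clm_apply
      continuousOn_const

theorem integrable_neg_lap_div_mul_sq (hU : IsOpen U) (hw : ContDiffOn ℝ 2 w U)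
    (hw0 : ∀ x ∈ U, w x ≠ 0) (hφ : Continuous φ) (hφc : HasCompactSupport φ)
    (hφU : tsupport φ ⊆ U) : Integrable (fun x => -lap w x / w x * φ x ^ 2) :=
  (((hw.continuousOn_lap hU).neg.div hw.continuousOn hw0).mul (hφ.pow 2).continuousOn
    ).integrable_of_support_subset_tsupport hU hφc hφU
    (support_subset_iff'.2 fun x hx => by simp [image_eq_zero_of_notMem_tsupport hx])

theorem setIntegral_neg_lap_div_mul_sq_le (hU : IsOpen U) (hw : ContDiffOn ℝ 2 w U)
    (hw0 : ∀ x ∈ U, w x ≠ 0) (hφ : ContDiff ℝ 1 φ) (hφc : HasCompactSupport φ)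
    (hφU : tsupport φ ⊆ U) :
    ∫ x in U, -lap w x / w x * φ x ^ 2 ≤ ∫ x in U, ‖gradient φ x‖ ^ 2 := by
  have hφ_out : ∀ x ∉ U, x ∉ tsupport φ := fun x hx h => hx (hφU h)
  rw [setIntegral_eq_integral_of_forall_compl_eq_zero fun x hx => by
      simp [image_eq_zero_of_notMem_tsupport (hφ_out x hx)],
    setIntegral_eq_integral_of_forall_compl_eq_zero fun x hx => by
      simp [sq_norm_gradient_eq_sum, fderiv_of_notMem_tsupport ℝ (hφ_out x hx)]]
  have hlap (i : Fin N) : Integrable fun x => φ x ^ 2 / w x *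
      fderiv ℝ (fun y => fderiv ℝ w y (EuclideanSpace.single i 1)) x (EuclideanSpace.single i 1) :=
    integrable_sq_div_mul hU hw.continuousOn hw0 hφ.continuous hφc hφU
      (((hw.fderiv_apply_of_isOpen hU _).continuousOn_fderiv_of_isOpen hU le_rfl).clm_apply
        continuousOn_const)
  calc ∫ x, -lap w x / w x * φ x ^ 2
      = ∑ i, -∫ x, φ x ^ 2 / w x *
          fderiv ℝ (fun y => fderiv ℝ w y (EuclideanSpace.single i 1)) x
            (EuclideanSpace.single i 1) := by
        simp_rw [neg_lap_div_mul_sq_eq_sum, ← integral_neg]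
        exact integral_finsetSum _ fun i _ => (hlap i).fun_neg
    _ ≤ ∑ i, ∫ x, fderiv ℝ φ x (EuclideanSpace.single i 1) ^ 2 :=
        Finset.sum_le_sum fun i _ => neg_integral_sq_div_mul_fderiv_fderiv_le hU hw hw0 hφ hφc hφU _
    _ = ∫ x, ‖gradient φ x‖ ^ 2 := by
        simp_rw [sq_norm_gradient_eq_sum]
        exact (integral_finsetSum _ fun i _ => hφ.integrable_fderiv_apply_sq hφc _).symm

end Euclidean

theorem sqrt_mul_le_add_div_two {a b p q : ℝ} (ha : 0 ≤ a) (hb : 0 ≤ b) (hp : 0 < p)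
    (hq : 0 < q) : √(a * b) ≤ (b * q / p + a * p / q) / 2 := by
  have hab : a * b = (b * q / p) * (a * p / q) := by field_simp
  rw [hab, sqrt_le_left (by positivity)]
  nlinarith [sq_nonneg (b * q / p - a * p / q)]

theorem sqrt_mul_mul_le_add_div_two {a b c p q s : ℝ} (ha : 0 ≤ a) (hb : 0 ≤ b) (hc : 0 ≤ c)
    (hp : 0 < p) (hq : 0 < q) (hs : 0 ≤ s) :
    √(a * b) * s ≤ ((b * q + c * p) / p * s + (a * p + c * q) / q * s) / 2 := by
  have hsplit : ((b * q + c * p) / p * s + (a * p + c * q) / q * s) / 2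
      = (b * q / p + a * p / q) / 2 * s + c * s := by
    field_simp
    ring
  rw [hsplit]
  nlinarith [mul_le_mul_of_nonneg_right (sqrt_mul_le_add_div_two ha hb hp hq) hs,
    mul_nonneg hc hs]

theorem stability_inequality_general {N : ℕ}
    (Ω : Set (EuclideanSpace ℝ (Fin N))) (hΩ : IsBoundedDomain Ω)
    (f g : ℝ → ℝ)
    (hfmono : Monotone f) (hgmono : Monotone g)
    (u v : EuclideanSpace ℝ (Fin N) → ℝ)
    (huv : IsStableSystemSolution Ω f g u v)
    (φ : EuclideanSpace ℝ (Fin N) → ℝ)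
    (hφ : ContDiff ℝ 1 φ) (hφc : HasCompactSupport φ) (hφΩ : tsupport φ ⊆ Ω) :
    ∫ x in Ω, Real.sqrt (deriv f (u x) * deriv g (v x)) * φ x ^ 2 ≤
      ∫ x in Ω, ‖gradient φ x‖ ^ 2 := by
  obtain ⟨-, lam1, φ₁, ψ₁, hlam1, hφ₁, hψ₁, hφ₁pos, hψ₁pos, hφ₁eq, hψ₁eq, -, -⟩ := huv
  have hΩo : IsOpen Ω := hΩ.1
  have hφ₁Ω := hφ₁.mono subset_closure
  have hψ₁Ω := hψ₁.mono subset_closure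
  have hφ₁0 : ∀ x ∈ Ω, φ₁ x ≠ 0 := fun x hx => (hφ₁pos x hx).ne'
  have hψ₁0 : ∀ x ∈ Ω, ψ₁ x ≠ 0 := fun x hx => (hψ₁pos x hx).ne'
  have hφ₁int := integrable_neg_lap_div_mul_sq hΩo hφ₁Ω hφ₁0 hφ.continuous hφc hφΩ
  have hψ₁int := integrable_neg_lap_div_mul_sq hΩo hψ₁Ω hψ₁0 hφ.continuous hφc hφΩ
  calc ∫ x in Ω, √(deriv f (u x) * deriv g (v x)) * φ x ^ 2
      ≤ ∫ x in Ω, (-lap φ₁ x / φ₁ x * φ x ^ 2 + -lap ψ₁ x / ψ₁ x * φ x ^ 2) / 2 := by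
        refine integral_mono_of_nonneg (ae_of_all _ fun x => by positivity)
          ((hφ₁int.add hψ₁int).div_const 2).integrableOn
          (ae_restrict_of_forall_mem hΩo.measurableSet fun x hx => ?_)
        dsimp only
        rw [show -lap φ₁ x = deriv g (v x) * ψ₁ x + lam1 * φ₁ x by linarith [hφ₁eq x hx],
          show -lap ψ₁ x = deriv f (u x) * φ₁ x + lam1 * ψ₁ x by linarith [hψ₁eq x hx]]
        exact sqrt_mul_mul_le_add_div_two hfmono.deriv_nonneg hgmono.deriv_nonneg hlam1
          (hφ₁pos x hx) (hψ₁pos x hx) (sq_nonneg _)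
    _ = ((∫ x in Ω, -lap φ₁ x / φ₁ x * φ x ^ 2) + ∫ x in Ω, -lap ψ₁ x / ψ₁ x * φ x ^ 2) / 2 := by
        rw [integral_div, integral_add hφ₁int.integrableOn hψ₁int.integrableOn]
    _ ≤ ((∫ x in Ω, ‖gradient φ x‖ ^ 2) + ∫ x in Ω, ‖gradient φ x‖ ^ 2) / 2 := by
        gcongr (?_ + ?_) / 2
        · exact setIntegral_neg_lap_div_mul_sq_le hΩo hφ₁Ω hφ₁0 hφ hφc hφΩ
        · exact setIntegral_neg_lap_div_mul_sq_le hΩo hψ₁Ω hψ₁0 hφ hφc hφΩ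
    _ = ∫ x in Ω, ‖gradient φ x‖ ^ 2 := by ring

/-- **Lemma 1.** Stability inequality: for a stable solution of the system
`-Δu = g(v)`, `-Δv = f(u)` with nondecreasing `C¹` nonlinearities, and any
`φ ∈ C¹_c(Ω)`, one has `∫ √(f'(u) g'(v)) φ² ≤ ∫ |∇φ|²`. -/
theorem stability_inequality {N : ℕ} (hN : 1 ≤ N)
    (Ω : Set (EuclideanSpace ℝ (Fin N))) (hΩ : IsBoundedDomain Ω)
    (f g : ℝ → ℝ) (hf : ContDiff ℝ 1 f) (hg : ContDiff ℝ 1 g)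
    (hfmono : Monotone f) (hgmono : Monotone g)
    (u v : EuclideanSpace ℝ (Fin N) → ℝ)
    (huv : IsStableSystemSolution Ω f g u v)
    (φ : EuclideanSpace ℝ (Fin N) → ℝ)
    (hφ : ContDiff ℝ 1 φ) (hφc : HasCompactSupport φ) (hφΩ : tsupport φ ⊆ Ω) :
    ∫ x in Ω, Real.sqrt (deriv f (u x) * deriv g (v x)) * φ x ^ 2 ≤
      ∫ x in Ω, ‖gradient φ x‖ ^ 2 :=
  stability_inequality_general Ω hΩ f g hfmono hgmono u v huv φ hφ hφc hφΩ
end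

section
/- Let N ≥ 1, Ω ⊂ ℝ^N a smoothly bounded domain, f, g nondecreasing C¹ functions, and (u, v) ∈ C²(Ω̄)² a solution of −Δu = g(v), −Δv = f(u) in Ω, u = v = 0 on ∂Ω. Suppose λ₁ ≥ 0 and positive φ₁, ψ₁ ∈ C²(Ω̄) satisfy −Δφ₁ − g′(v)ψ₁ = λ₁φ₁ and −Δψ₁ − f′(u)φ₁ = λ₁ψ₁ in Ω with φ₁ = ψ₁ = 0 on ∂Ω. Then for every φ ∈ C¹_c(Ω): ∫_Ω g′(v) (ψ₁/φ₁) φ² dx ≤ ∫_Ω |∇φ|² dx, and likewise ∫_Ω f′(u) (φ₁/ψ₁) φ² dx ≤ ∫_Ω |∇φ|² dx. -/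
open MeasureTheory Real
open scoped RealInnerProductSpace

/-!
The argument is Picone's identity. For `Φ > 0` with `q Φ ≤ -ΔΦ` and `w = φ² / Φ`,
`|∇φ|² - div (w ∇Φ) = |∇φ - (φ/Φ) ∇Φ|² - w ΔΦ ≥ w q Φ = q φ²`,
and `div (w ∇Φ)` integrates to zero because `w ∇Φ` is `C¹` with compact support in `Ω`.
Applied to `Φ = φ₁`, `q = g'(v) ψ₁/φ₁`, the eigenvalue equation and `λ₁ φ₁ ≥ 0` give `q Φ ≤ -ΔΦ`;
the second inequality is the same with the roles of `φ₁` and `ψ₁` exchanged.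
-/

theorem ContDiffOn.contDiff_of_tsupport_subset {𝕜 E F : Type*} [NontriviallyNormedField 𝕜]
    [NormedAddCommGroup E] [NormedSpace 𝕜 E] [NormedAddCommGroup F] [NormedSpace 𝕜 F]
    {n : WithTop ℕ∞} {f : E → F} {U : Set E} (hf : ContDiffOn 𝕜 n f U) (hU : IsOpen U)
    (hsupp : tsupport f ⊆ U) : ContDiff 𝕜 n f := by
  refine contDiff_iff_contDiffAt.2 fun x => ?_
  by_cases hx : x ∈ U
  · exact hf.contDiffAt (hU.mem_nhds hx)
  · exact contDiffAt_const.congr_of_eventuallyEq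
      (notMem_tsupport_iff_eventuallyEq.1 fun h => hx (hsupp h))

section IntegralFDeriv

variable {E : Type*} [NormedAddCommGroup E] [NormedSpace ℝ E] [MeasurableSpace E] [BorelSpace E]
  {μ : Measure E} {h : E → ℝ}

theorem ContDiff.integrable_fderiv_apply [IsFiniteMeasureOnCompacts μ] (hh : ContDiff ℝ 1 h)
    (hc : HasCompactSupport h) (v : E) : Integrable (fun x => fderiv ℝ h x v) μ :=
  ((hh.continuous_fderiv one_ne_zero).clm_apply continuous_const).integrable_of_hasCompactSupport
    (hc.fderiv_apply ℝ v)

theorem integral_fderiv_apply_eq_zero [FiniteDimensional ℝ E] [μ.IsAddHaarMeasure]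
    (hh : ContDiff ℝ 1 h) (hc : HasCompactSupport h) (v : E) :
    ∫ x, fderiv ℝ h x v ∂μ = 0 := by
  have := integral_mul_fderiv_eq_neg_fderiv_mul_of_integrable (μ := μ) (f := fun _ => (1 : ℝ))
    (g := h) (v := v) (by simp) (by simpa using hh.integrable_fderiv_apply hc v)
    (by simpa using hh.continuous.integrable_of_hasCompactSupport hc)
    (fun _ _ => differentiableAt_const _) (fun x _ => hh.differentiable one_ne_zero x)
  simpa using this

end IntegralFDeriv

section Pointwise

variable {E : Type*} [NormedAddCommGroup E] [NormedSpace ℝ E]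

theorem fderiv_sq_div_mul_fderiv_le {φ Φ : E → ℝ} {x : E} (hφ : DifferentiableAt ℝ φ x)
    (hΦ : DifferentiableAt ℝ Φ x) (hΦx : Φ x ≠ 0) (v : E) :
    fderiv ℝ (fun y => φ y ^ 2 / Φ y) x v * fderiv ℝ Φ x v ≤ fderiv ℝ φ x v ^ 2 := by
  have hw := (hφ.hasFDerivAt.pow 2).fun_mul ((hasFDerivAt_inv hΦx).comp x hΦ.hasFDerivAt)
  simp only [Function.comp_def, ← div_eq_mul_inv] at hw
  calc fderiv ℝ (fun y => φ y ^ 2 / Φ y) x v * fderiv ℝ Φ x v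
      = fderiv ℝ φ x v ^ 2 - (fderiv ℝ φ x v - φ x / Φ x * fderiv ℝ Φ x v) ^ 2 := by
        simp only [hw.fderiv, add_apply, smul_apply, ContinuousLinearMap.comp_apply,
          ContinuousLinearMap.toSpanSingleton_apply, smul_eq_mul]
        field_simp
        ring
    _ ≤ fderiv ℝ φ x v ^ 2 := sub_le_self _ (sq_nonneg _)

noncomputable def piconeFlux (φ Φ : E → ℝ) (v : E) : E → ℝ :=
  fun y => φ y ^ 2 / Φ y * fderiv ℝ Φ y v

theorem tsupport_piconeFlux_subset (φ Φ : E → ℝ) (v : E) :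
    tsupport (piconeFlux φ Φ v) ⊆ tsupport φ :=
  closure_mono fun y hy => by
    by_contra hφy
    exact hy (by simp [piconeFlux, Function.notMem_support.1 hφy])

end Pointwise

section Picone

variable {N : ℕ} {Ω : Set (EuclideanSpace ℝ (Fin N))} {φ Φ q : EuclideanSpace ℝ (Fin N) → ℝ}
  {x : EuclideanSpace ℝ (Fin N)}

local notation "e" i => EuclideanSpace.single i (1 : ℝ)

theorem norm_gradient_eq_norm_fderiv (φ : EuclideanSpace ℝ (Fin N) → ℝ)
    (x : EuclideanSpace ℝ (Fin N)) : ‖gradient φ x‖ = ‖fderiv ℝ φ x‖ :=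
  (InnerProductSpace.toDual ℝ _).symm.norm_map _

theorem norm_gradient_sq_eq_sum (φ : EuclideanSpace ℝ (Fin N) → ℝ)
    (x : EuclideanSpace ℝ (Fin N)) :
    ‖gradient φ x‖ ^ 2 = ∑ i, fderiv ℝ φ x (e i) ^ 2 := by
  rw [EuclideanSpace.real_norm_sq_eq]
  refine Finset.sum_congr rfl fun i _ => ?_
  rw [← toDual_gradient, InnerProductSpace.toDual_apply_apply, EuclideanSpace.inner_single_right]
  simp

theorem contDiff_piconeFlux (hΩ : IsOpen Ω) (hΦ : ContDiffOn ℝ 2 Φ Ω)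
    (hΦ0 : ∀ x ∈ Ω, Φ x ≠ 0) (hφ : ContDiff ℝ 1 φ) (hφΩ : tsupport φ ⊆ Ω)
    (v : EuclideanSpace ℝ (Fin N)) : ContDiff ℝ 1 (piconeFlux φ Φ v) := by
  refine ContDiffOn.contDiff_of_tsupport_subset ?_ hΩ
    ((tsupport_piconeFlux_subset φ Φ v).trans hφΩ)
  exact ((hφ.contDiffOn.pow 2).div (hΦ.of_le (by norm_num)) hΦ0).mul
    ((hΦ.fderiv_of_isOpen hΩ (by norm_num)).clm_apply contDiffOn_const)

theorem sum_fderiv_piconeFlux_eq (hΩ : IsOpen Ω) (hΦ : ContDiffOn ℝ 2 Φ Ω)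
    (hφ : DifferentiableAt ℝ φ x) (hx : x ∈ Ω) (hΦx : Φ x ≠ 0) :
    ∑ i, fderiv ℝ (piconeFlux φ Φ (e i)) x (e i) =
      ∑ i, fderiv ℝ (fun y => φ y ^ 2 / Φ y) x (e i) * fderiv ℝ Φ x (e i) +
        φ x ^ 2 / Φ x * lap Φ x := by
  have hΦx' : ContDiffAt ℝ 2 Φ x := hΦ.contDiffAt (hΩ.mem_nhds hx)
  have hΦd : DifferentiableAt ℝ Φ x := hΦx'.differentiableAt (by norm_num)
  have hw : DifferentiableAt ℝ (fun y => φ y ^ 2 / Φ y) x := by fun_prop (disch := assumption)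
  rw [lap, Finset.mul_sum, ← Finset.sum_add_distrib]
  refine Finset.sum_congr rfl fun i _ => ?_
  have hdΦ : DifferentiableAt ℝ (fun y => fderiv ℝ Φ y (e i)) x :=
    ((hΦx'.fderiv_right (m := 1) (by norm_num)).clm_apply contDiffAt_const).differentiableAt
      one_ne_zero
  unfold piconeFlux
  rw [fderiv_fun_mul hw hdΦ]
  simp only [add_apply, smul_apply, smul_eq_mul]
  ring

theorem mul_sq_le_norm_gradient_sq_sub_sum_fderiv_piconeFlux (hΩ : IsOpen Ω)
    (hΦ : ContDiffOn ℝ 2 Φ Ω) (hφ : DifferentiableAt ℝ φ x) (hx : x ∈ Ω) (hΦx : 0 < Φ x)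
    {c : ℝ} (hcΦ : c * Φ x ≤ -lap Φ x) :
    c * φ x ^ 2 ≤ ‖gradient φ x‖ ^ 2 - ∑ i, fderiv ℝ (piconeFlux φ Φ (e i)) x (e i) := by
  have hΦd : DifferentiableAt ℝ Φ x :=
    (hΦ.contDiffAt (hΩ.mem_nhds hx)).differentiableAt (by norm_num)
  have hpicone : ∑ i, fderiv ℝ (fun y => φ y ^ 2 / Φ y) x (e i) * fderiv ℝ Φ x (e i) ≤
      ∑ i, fderiv ℝ φ x (e i) ^ 2 :=
    Finset.sum_le_sum fun i _ => fderiv_sq_div_mul_fderiv_le hφ hΦd hΦx.ne' _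
  have hlap : c * φ x ^ 2 ≤ φ x ^ 2 / Φ x * -lap Φ x :=
    calc c * φ x ^ 2 = φ x ^ 2 / Φ x * (c * Φ x) := by field_simp
      _ ≤ φ x ^ 2 / Φ x * -lap Φ x := mul_le_mul_of_nonneg_left hcΦ (by positivity)
  rw [sum_fderiv_piconeFlux_eq hΩ hΦ hφ hx hΦx.ne', norm_gradient_sq_eq_sum]
  linarith

theorem integral_mul_sq_le_integral_norm_gradient_sq (hΩ : IsOpen Ω) (hΦ : ContDiffOn ℝ 2 Φ Ω)
    (hΦpos : ∀ x ∈ Ω, 0 < Φ x) (hqΦ : ∀ x ∈ Ω, q x * Φ x ≤ -lap Φ x)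
    (hφ : ContDiff ℝ 1 φ) (hφc : HasCompactSupport φ) (hφΩ : tsupport φ ⊆ Ω) :
    ∫ x in Ω, q x * φ x ^ 2 ≤ ∫ x in Ω, ‖gradient φ x‖ ^ 2 := by
  set D := fun x => ∑ i, fderiv ℝ (piconeFlux φ Φ (e i)) x (e i)
  have hflux (i : Fin N) : ContDiff ℝ 1 (piconeFlux φ Φ (e i)) :=
    contDiff_piconeFlux hΩ hΦ (fun x hx => (hΦpos x hx).ne') hφ hφΩ _
  have hfluxc (i : Fin N) : HasCompactSupport (piconeFlux φ Φ (e i)) :=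
    hφc.of_isClosed_subset (isClosed_tsupport _) (tsupport_piconeFlux_subset φ Φ _)
  have hD : Integrable D :=
    integrable_finsetSum _ fun i _ => (hflux i).integrable_fderiv_apply (hfluxc i) _
  have hD0 : ∫ x in Ω, D x = 0 := by
    rw [setIntegral_eq_integral_of_forall_compl_eq_zero fun x hx => ?_,
      integral_finsetSum _ fun i _ => (hflux i).integrable_fderiv_apply (hfluxc i) _]
    · exact Finset.sum_eq_zero fun i _ => integral_fderiv_apply_eq_zero (hflux i) (hfluxc i) _
    · refine Finset.sum_eq_zero fun i _ => ?_
      rw [fderiv_of_notMem_tsupport ℝ fun h => hx (hφΩ (tsupport_piconeFlux_subset φ Φ _ h))]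
      rfl
  have hgrad : Integrable (fun x => ‖gradient φ x‖ ^ 2) := by
    simp only [norm_gradient_eq_norm_fderiv]
    have hc : HasCompactSupport fun x => ‖fderiv ℝ φ x‖ ^ 2 :=
      (hφc.fderiv ℝ).norm.comp_left (g := fun t : ℝ => t ^ 2) (by norm_num)
    exact ((hφ.continuous_fderiv one_ne_zero).norm.pow 2).integrable_of_hasCompactSupport hc
  by_cases hint : IntegrableOn (fun x => q x * φ x ^ 2) Ω
  · calc ∫ x in Ω, q x * φ x ^ 2 ≤ ∫ x in Ω, (‖gradient φ x‖ ^ 2 - D x) :=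
          setIntegral_mono_on hint (hgrad.sub hD).integrableOn hΩ.measurableSet fun x hx =>
            mul_sq_le_norm_gradient_sq_sub_sum_fderiv_piconeFlux hΩ hΦ
              (hφ.differentiable one_ne_zero x) hx (hΦpos x hx) (hqΦ x hx)
      _ = ∫ x in Ω, ‖gradient φ x‖ ^ 2 := by
          rw [integral_sub hgrad.integrableOn hD.integrableOn, hD0, sub_zero]
  · rw [integral_undef hint]
    exact setIntegral_nonneg hΩ.measurableSet fun _ _ => sq_nonneg _

end Picone

theorem ratio_stability_inequalities_general {N : ℕ}
    (Ω : Set (EuclideanSpace ℝ (Fin N))) (hΩ : IsBoundedDomain Ω)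
    (f g : ℝ → ℝ)
    (u v : EuclideanSpace ℝ (Fin N) → ℝ)
    (lam1 : ℝ) (hlam1 : 0 ≤ lam1)
    (φ₁ ψ₁ : EuclideanSpace ℝ (Fin N) → ℝ)
    (hφ₁ : ContDiffOn ℝ 2 φ₁ (closure Ω)) (hψ₁ : ContDiffOn ℝ 2 ψ₁ (closure Ω))
    (hφ₁pos : ∀ x ∈ Ω, 0 < φ₁ x) (hψ₁pos : ∀ x ∈ Ω, 0 < ψ₁ x)
    (heig1 : ∀ x ∈ Ω, -lap φ₁ x - deriv g (v x) * ψ₁ x = lam1 * φ₁ x)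
    (heig2 : ∀ x ∈ Ω, -lap ψ₁ x - deriv f (u x) * φ₁ x = lam1 * ψ₁ x)
    (φ : EuclideanSpace ℝ (Fin N) → ℝ)
    (hφ : ContDiff ℝ 1 φ) (hφc : HasCompactSupport φ) (hφΩ : tsupport φ ⊆ Ω) :
    (∫ x in Ω, deriv g (v x) * (ψ₁ x / φ₁ x) * φ x ^ 2 ≤
        ∫ x in Ω, ‖gradient φ x‖ ^ 2) ∧
    (∫ x in Ω, deriv f (u x) * (φ₁ x / ψ₁ x) * φ x ^ 2 ≤
        ∫ x in Ω, ‖gradient φ x‖ ^ 2) := by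
  have hsupersolution (a Φ Ψ : EuclideanSpace ℝ (Fin N) → ℝ) (hΦpos : ∀ x ∈ Ω, 0 < Φ x)
      (heig : ∀ x ∈ Ω, -lap Φ x - a x * Ψ x = lam1 * Φ x) (x : EuclideanSpace ℝ (Fin N))
      (hx : x ∈ Ω) :
      a x * (Ψ x / Φ x) * Φ x ≤ -lap Φ x := by
    rw [mul_assoc, div_mul_cancel₀ _ (hΦpos x hx).ne']
    linarith [heig x hx, mul_nonneg hlam1 (hΦpos x hx).le]
  exact ⟨integral_mul_sq_le_integral_norm_gradient_sq hΩ.1 (hφ₁.mono subset_closure) hφ₁pos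
      (hsupersolution _ _ _ hφ₁pos heig1) hφ hφc hφΩ,
    integral_mul_sq_le_integral_norm_gradient_sq hΩ.1 (hψ₁.mono subset_closure) hψ₁pos
      (hsupersolution _ _ _ hψ₁pos heig2) hφ hφc hφΩ⟩

/-- For a solution of `-Δu = g(v)`, `-Δv = f(u)` with linearized
eigenpair `(λ₁, (φ₁, ψ₁))`, `λ₁ ≥ 0`, `φ₁, ψ₁ > 0`, every `φ ∈ C¹_c(Ω)` satisfies
`∫ g'(v) (ψ₁/φ₁) φ² ≤ ∫ |∇φ|²` and `∫ f'(u) (φ₁/ψ₁) φ² ≤ ∫ |∇φ|²`. -/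
theorem ratio_stability_inequalities {N : ℕ} (hN : 1 ≤ N)
    (Ω : Set (EuclideanSpace ℝ (Fin N))) (hΩ : IsBoundedDomain Ω)
    (f g : ℝ → ℝ) (hf : ContDiff ℝ 1 f) (hg : ContDiff ℝ 1 g)
    (hfmono : Monotone f) (hgmono : Monotone g)
    (u v : EuclideanSpace ℝ (Fin N) → ℝ)
    (huv : IsSystemSolution Ω f g u v)
    (lam1 : ℝ) (hlam1 : 0 ≤ lam1)
    (φ₁ ψ₁ : EuclideanSpace ℝ (Fin N) → ℝ)
    (hφ₁ : ContDiffOn ℝ 2 φ₁ (closure Ω)) (hψ₁ : ContDiffOn ℝ 2 ψ₁ (closure Ω))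
    (hφ₁pos : ∀ x ∈ Ω, 0 < φ₁ x) (hψ₁pos : ∀ x ∈ Ω, 0 < ψ₁ x)
    (heig1 : ∀ x ∈ Ω, -lap φ₁ x - deriv g (v x) * ψ₁ x = lam1 * φ₁ x)
    (heig2 : ∀ x ∈ Ω, -lap ψ₁ x - deriv f (u x) * φ₁ x = lam1 * ψ₁ x)
    (hφ₁bd : ∀ x ∈ frontier Ω, φ₁ x = 0) (hψ₁bd : ∀ x ∈ frontier Ω, ψ₁ x = 0)
    (φ : EuclideanSpace ℝ (Fin N) → ℝ)
    (hφ : ContDiff ℝ 1 φ) (hφc : HasCompactSupport φ) (hφΩ : tsupport φ ⊆ Ω) :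
    (∫ x in Ω, deriv g (v x) * (ψ₁ x / φ₁ x) * φ x ^ 2 ≤
        ∫ x in Ω, ‖gradient φ x‖ ^ 2) ∧
    (∫ x in Ω, deriv f (u x) * (φ₁ x / ψ₁ x) * φ x ^ 2 ≤
        ∫ x in Ω, ‖gradient φ x‖ ^ 2) :=
  ratio_stability_inequalities_general Ω hΩ f g u v lam1 hlam1 φ₁ ψ₁ hφ₁ hψ₁ hφ₁pos hψ₁pos heig1
    heig2 φ hφ hφc hφΩ
end
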